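/- arXiv:2110.11055 — 9 statements merged into one kernel-verified Lean document; each statement's English description precedes it below -/
import Mathlib

section
/- Let f : int(ℝ_+^k) → int(ℝ_+^k) be monotonic (order-preserving with respect to the coordinatewise order). Then f is a c-Lipschitz contraction with respect to Thompson's metric with factor c ∈ [0,1) if and only if there exists c ∈ [0,1) such that for all x ∈ int(ℝ_+^k) and all λ > 1, f(λx) ≤ λ^c f(x). -/
open Filter Topology Set

noncomputable def Mratio {k : ℕ} (x y : Fin k → ℝ) : ℝ :=
  sInf {β : ℝ | 0 < β ∧ ∀ i, x i ≤ β * y i}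

noncomputable def dT {k : ℕ} (x y : Fin k → ℝ) : ℝ :=
  Real.log (max (Mratio x y) (Mratio y x))

def posOrth (k : ℕ) : Set (Fin k → ℝ) := {x | ∀ i, 0 < x i}

def nonnegOrth (k : ℕ) : Set (Fin k → ℝ) := {x | ∀ i, 0 ≤ x i}

section helpers

variable {k : ℕ}

lemma mset_bddBelow (x y : Fin k → ℝ) :
    BddBelow {β : ℝ | 0 < β ∧ ∀ i, x i ≤ β * y i} :=
  ⟨0, fun β hβ => hβ.1.le⟩

lemma Mratio_le {x y : Fin k → ℝ} {β : ℝ} (hβ : 0 < β) (h : ∀ i, x i ≤ β * y i) :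
    Mratio x y ≤ β :=
  csInf_le (mset_bddBelow x y) ⟨hβ, h⟩

lemma mset_nonempty {x y : Fin k → ℝ} (hx : x ∈ posOrth k) (hy : y ∈ posOrth k) :
    {β : ℝ | 0 < β ∧ ∀ i, x i ≤ β * y i}.Nonempty := by
  refine ⟨1 + ∑ i, x i / y i, ?_, ?_⟩
  · have : 0 ≤ ∑ i, x i / y i :=
      Finset.sum_nonneg fun i _ => div_nonneg (hx i).le (hy i).le
    linarith
  · intro i
    have h1 : x i / y i ≤ ∑ j, x j / y j :=
      Finset.single_le_sum (fun j _ => div_nonneg (hx j).le (hy j).le) (Finset.mem_univ i)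
    have h2 : x i / y i ≤ 1 + ∑ j, x j / y j := by linarith
    calc x i = (x i / y i) * y i := (div_mul_cancel₀ (x i) (hy i).ne').symm
    _ ≤ (1 + ∑ j, x j / y j) * y i := by
        exact mul_le_mul_of_nonneg_right h2 (hy i).le

lemma div_le_Mratio {x y : Fin k → ℝ} (hx : x ∈ posOrth k) (hy : y ∈ posOrth k) (i : Fin k) :
    x i / y i ≤ Mratio x y :=
  le_csInf (mset_nonempty hx hy) fun β hβ => (div_le_iff₀ (hy i)).mpr (hβ.2 i)

lemma Mratio_pos {x y : Fin k → ℝ} (hk : 0 < k) (hx : x ∈ posOrth k) (hy : y ∈ posOrth k) :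
    0 < Mratio x y := by
  have i0 : Fin k := ⟨0, hk⟩
  exact lt_of_lt_of_le (div_pos (hx i0) (hy i0)) (div_le_Mratio hx hy i0)

lemma le_Mratio_smul {x y : Fin k → ℝ} (hx : x ∈ posOrth k) (hy : y ∈ posOrth k) (i : Fin k) :
    x i ≤ Mratio x y * y i :=
  (div_le_iff₀ (hy i)).mp (div_le_Mratio hx hy i)

lemma Mratio_zero (hk : k = 0) (x y : Fin k → ℝ) : Mratio x y = 0 := by
  subst hk
  have : {β : ℝ | 0 < β ∧ ∀ i : Fin 0, x i ≤ β * y i} = Ioi 0 := by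
    ext β
    constructor
    · rintro ⟨h, -⟩; exact h
    · intro h; exact ⟨h, fun i => i.elim0⟩
  rw [Mratio, this, csInf_Ioi]

lemma dT_self_zero {x : Fin k → ℝ} (hx : x ∈ posOrth k) : dT x x = 0 := by
  rcases Nat.eq_zero_or_pos k with hk | hk
  · simp [dT, Mratio_zero hk]
  have h1 : Mratio x x ≤ 1 := Mratio_le one_pos (by intro i; linarith [(hx i).le])
  have i0 : Fin k := ⟨0, hk⟩
  have h2 : (1:ℝ) ≤ Mratio x x := by
    have := div_le_Mratio hx hx i0
    rwa [div_self (hx i0).ne'] at this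
  have : Mratio x x = 1 := le_antisymm h1 h2
  simp [dT, this]

lemma Mratio_smul {x : Fin k → ℝ} (hk : 0 < k) (hx : x ∈ posOrth k) {l : ℝ} (hl : 0 < l) :
    Mratio (l • x) x = l := by
  refine le_antisymm (Mratio_le hl fun i => by simp [Pi.smul_apply]) ?_
  have i0 : Fin k := ⟨0, hk⟩
  have hxpos : l • x ∈ posOrth k := fun i => by
    simpa [Pi.smul_apply] using mul_pos hl (hx i)
  have := div_le_Mratio hxpos hx i0
  rwa [Pi.smul_apply, smul_eq_mul, mul_div_assoc, div_self (hx i0).ne', mul_one] at this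

lemma dT_smul {x : Fin k → ℝ} (hk : 0 < k) (hx : x ∈ posOrth k) {l : ℝ} (hl : 1 < l) :
    dT (l • x) x = Real.log l := by
  have hl0 : 0 < l := lt_trans one_pos hl
  have h1 : Mratio (l • x) x = l := Mratio_smul hk hx hl0
  have h2 : Mratio x (l • x) ≤ 1 / l := by
    refine Mratio_le (by positivity) fun i => ?_
    rw [Pi.smul_apply, smul_eq_mul]
    rw [one_div, inv_mul_cancel_left₀ hl0.ne']
  have h3 : Mratio x (l • x) ≤ l := h2.trans (by
    rw [div_le_iff₀ hl0]; nlinarith)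
  rw [dT, h1, max_eq_left h3]

end helpers

/-- for a monotone self-map of int(ℝ₊ᵏ), being a c-Lipschitz contraction
w.r.t. Thompson's metric with c ∈ [0,1) is equivalent to f(λx) ≤ λ^c f(x) for all λ > 1. -/
theorem stmt3 {k : ℕ} (f : (Fin k → ℝ) → (Fin k → ℝ))
    (hmap : ∀ x ∈ posOrth k, f x ∈ posOrth k)
    (hmono : ∀ x ∈ posOrth k, ∀ y ∈ posOrth k, x ≤ y → f x ≤ f y)
    (c : ℝ) (hc0 : 0 ≤ c) (hc1 : c < 1) :
    (∀ x ∈ posOrth k, ∀ y ∈ posOrth k, dT (f x) (f y) ≤ c * dT x y) ↔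
    (∀ x ∈ posOrth k, ∀ l : ℝ, 1 < l → f (l • x) ≤ (l ^ c) • f x) := by
  rcases Nat.eq_zero_or_pos k with hk | hk
  · constructor
    · intro _ x _ l _
      subst hk
      intro i; exact i.elim0
    · intro _ x hx y hy
      simp [dT, Mratio_zero hk]
  constructor
  · -- contraction → homogeneity bound
    intro hcontr x hx l hl
    have hl0 : 0 < l := lt_trans one_pos hl
    have hlx : l • x ∈ posOrth k := fun i => by
      simpa [Pi.smul_apply] using mul_pos hl0 (hx i)
    have hfl := hmap _ hlx
    have hfx := hmap _ hx
    have h := hcontr _ hlx _ hx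
    rw [dT_smul hk hx hl] at h
    -- h : dT (f (l•x)) (f x) ≤ c * log l
    have hmaxpos : 0 < max (Mratio (f (l • x)) (f x)) (Mratio (f x) (f (l • x))) :=
      lt_max_of_lt_left (Mratio_pos hk hfl hfx)
    have hrp : (0:ℝ) < l ^ c := Real.rpow_pos_of_pos hl0 c
    have hlog : Real.log (l ^ c) = c * Real.log l := Real.log_rpow hl0 c
    have hle : max (Mratio (f (l • x)) (f x)) (Mratio (f x) (f (l • x))) ≤ l ^ c := by
      have := h
      rw [dT] at this
      rw [← Real.log_le_log_iff hmaxpos hrp] at *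
      rw [hlog]; exact this
    have hM : Mratio (f (l • x)) (f x) ≤ l ^ c := (le_max_left _ _).trans hle
    intro i
    calc f (l • x) i ≤ Mratio (f (l • x)) (f x) * f x i := le_Mratio_smul hfl hfx i
    _ ≤ l ^ c * f x i := mul_le_mul_of_nonneg_right hM (hfx i).le
  · -- homogeneity bound → contraction
    intro hhom x hx y hy
    set m := max (Mratio x y) (Mratio y x) with hm
    have hMxy : 0 < Mratio x y := Mratio_pos hk hx hy
    have hMyx : 0 < Mratio y x := Mratio_pos hk hy hx
    have hmpos : 0 < m := lt_max_of_lt_left hMxy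
    rcases le_or_gt m 1 with h1 | h1
    · -- then x = y
      have hxy : x ≤ y := by
        intro i
        have := le_Mratio_smul hx hy i
        have h' : Mratio x y ≤ 1 := (le_max_left _ _).trans h1
        nlinarith [(hy i).le]
      have hyx : y ≤ x := by
        intro i
        have := le_Mratio_smul hy hx i
        have h' : Mratio y x ≤ 1 := (le_max_right _ _).trans h1
        nlinarith [(hx i).le]
      have hxeq : x = y := le_antisymm hxy hyx
      subst hxeq
      rw [dT_self_zero (hmap _ hx), dT_self_zero hx]
      simp
    · -- m > 1
      have hmy : m • y ∈ posOrth k := fun i => by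
        simpa [Pi.smul_apply] using mul_pos hmpos (hy i)
      have hmx : m • x ∈ posOrth k := fun i => by
        simpa [Pi.smul_apply] using mul_pos hmpos (hx i)
      have hxmy : x ≤ m • y := by
        intro i
        have := le_Mratio_smul hx hy i
        have h' : Mratio x y ≤ m := le_max_left _ _
        have := mul_le_mul_of_nonneg_right h' (hy i).le
        simp only [Pi.smul_apply, smul_eq_mul]
        linarith
      have hymx : y ≤ m • x := by
        intro i
        have := le_Mratio_smul hy hx i
        have h' : Mratio y x ≤ m := le_max_right _ _
        have := mul_le_mul_of_nonneg_right h' (hx i).le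
        simp only [Pi.smul_apply, smul_eq_mul]
        linarith
      have hrp : (0:ℝ) < m ^ c := Real.rpow_pos_of_pos hmpos c
      have hfx := hmap _ hx
      have hfy := hmap _ hy
      have h2 : f x ≤ (m ^ c) • f y :=
        le_trans (hmono _ hx _ hmy hxmy) (hhom y hy m h1)
      have h3 : f y ≤ (m ^ c) • f x :=
        le_trans (hmono _ hy _ hmx hymx) (hhom x hx m h1)
      have hM1 : Mratio (f x) (f y) ≤ m ^ c :=
        Mratio_le hrp fun i => by simpa using h2 i
      have hM2 : Mratio (f y) (f x) ≤ m ^ c :=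
        Mratio_le hrp fun i => by simpa using h3 i
      have hmaxpos : 0 < max (Mratio (f x) (f y)) (Mratio (f y) (f x)) :=
        lt_max_of_lt_left (Mratio_pos hk hfx hfy)
      have hle : max (Mratio (f x) (f y)) (Mratio (f y) (f x)) ≤ m ^ c := max_le hM1 hM2
      calc dT (f x) (f y) ≤ Real.log (m ^ c) :=
        Real.log_le_log hmaxpos hle
      _ = c * Real.log m := Real.log_rpow hmpos c
      _ = c * dT x y := rfl
end

section
/- Let U ⊂ int(ℝ_+^k) be a compact set containing a nonempty open set, let d_0 := max_{x,y ∈ U} d_T(x,y) = ln λ_0 with λ_0 > 1, and let f : int(ℝ_+^k) → int(ℝ_+^k) be monotonic. If there exists c ∈ [0,1) such that f(λx) ≤ λ^c f(x) for all x ∈ U and all λ ∈ (1, λ_0], then d_T(f(x), f(y)) ≤ c · d_T(x,y) for all x,y ∈ U. -/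
open Filter Topology Set

/-! Write `m(x, y) = max (M(x, y), M(y, x))`, so that `d_T(x, y) = log m(x, y)`. For `a, b ∈ U`
with `μ = M(a, b) > 1` we have `a ≤ μ b` and `μ ≤ m(a, b) ≤ λ₀`, so monotonicity and the scaling
hypothesis give `f a ≤ f (μ b) ≤ μ^c f b`; if `μ ≤ 1` then `a ≤ b` and `f a ≤ f b`. Either way
`M(f a, f b) ≤ m(a, b)^c`, and taking logarithms gives `d_T(f a, f b) ≤ c d_T(a, b)`. -/

section Thompson

variable {k : ℕ} {x y : Fin k → ℝ}

lemma mratio_nonneg : 0 ≤ Mratio x y :=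
  Real.sInf_nonneg fun _ hβ => hβ.1.le

lemma mratio_le {β : ℝ} (hβ : 0 < β) (h : x ≤ β • y) : Mratio x y ≤ β :=
  csInf_le ⟨0, fun _ hγ => hγ.1.le⟩ ⟨hβ, h⟩

lemma le_mratio_smul (hy : y ∈ posOrth k) : x ≤ Mratio x y • y := by
  obtain ⟨B, hB⟩ := Finite.bddAbove_range fun i => x i / y i
  have hne : {β : ℝ | 0 < β ∧ ∀ i, x i ≤ β * y i}.Nonempty := by
    refine ⟨max B 1, by positivity, fun i => ?_⟩
    rw [← div_le_iff₀ (hy i)]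
    exact (hB ⟨i, rfl⟩).trans (le_max_left B 1)
  intro i
  rw [Pi.smul_apply, smul_eq_mul, ← div_le_iff₀ (hy i)]
  exact le_csInf hne fun β hβ => (div_le_iff₀ (hy i)).2 (hβ.2 i)

lemma one_le_max_mratio [Nonempty (Fin k)] (hx : x ∈ posOrth k) (hy : y ∈ posOrth k) :
    1 ≤ max (Mratio x y) (Mratio y x) := by
  by_contra! h
  obtain ⟨i⟩ := ‹Nonempty (Fin k)›
  have hxy : x i ≤ Mratio x y * y i := le_mratio_smul hy i
  have hyx : y i ≤ Mratio y x * x i := le_mratio_smul hx i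
  nlinarith [hx i, hy i, max_lt_iff.1 h, mratio_nonneg (x := x) (y := y),
    mratio_nonneg (x := y) (y := x)]

lemma dT_of_isEmpty [IsEmpty (Fin k)] : dT x y = 0 := by
  have hM : ∀ u v : Fin k → ℝ, Mratio u v = 0 := fun u v => by
    simp only [Mratio, IsEmpty.forall_iff, and_true]
    exact csInf_Ioi
  simp [dT, hM]

lemma max_mratio_le_of_dT_le [Nonempty (Fin k)] (hx : x ∈ posOrth k) (hy : y ∈ posOrth k)
    {l : ℝ} (hl : 0 < l) (h : dT x y ≤ Real.log l) : max (Mratio x y) (Mratio y x) ≤ l :=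
  (Real.log_le_log_iff (zero_lt_one.trans_le (one_le_max_mratio hx hy)) hl).1 h

lemma dT_le_log {t : ℝ} (ht : 1 ≤ t) (hxy : Mratio x y ≤ t) (hyx : Mratio y x ≤ t) :
    dT x y ≤ Real.log t := by
  rcases (le_max_of_le_left mratio_nonneg : 0 ≤ max (Mratio x y) (Mratio y x)).eq_or_lt
    with h0 | hpos
  · rw [dT, ← h0, Real.log_zero]
    exact Real.log_nonneg ht
  · exact Real.log_le_log hpos (max_le hxy hyx)

end Thompson

lemma mratio_map_le_rpow {k : ℕ} {f : (Fin k → ℝ) → (Fin k → ℝ)}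
    (hf : MonotoneOn f (posOrth k)) {c l₀ t : ℝ} {a b : Fin k → ℝ}
    (hscale : ∀ l : ℝ, 1 < l → l ≤ l₀ → f (l • b) ≤ l ^ c • f b) (hc0 : 0 ≤ c)
    (ha : a ∈ posOrth k) (hb : b ∈ posOrth k)
    (ht : 1 ≤ t) (hab : Mratio a b ≤ t) (htl : t ≤ l₀) :
    Mratio (f a) (f b) ≤ t ^ c := by
  by_cases hμ : 1 < Mratio a b
  · have hμ0 : 0 < Mratio a b := zero_lt_one.trans hμ
    have hμb : Mratio a b • b ∈ posOrth k := fun i => mul_pos hμ0 (hb i)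
    have hfab : f a ≤ Mratio a b ^ c • f b :=
      (hf ha hμb (le_mratio_smul hb)).trans (hscale _ hμ (hab.trans htl))
    calc Mratio (f a) (f b) ≤ Mratio a b ^ c := mratio_le (Real.rpow_pos_of_pos hμ0 c) hfab
      _ ≤ t ^ c := Real.rpow_le_rpow hμ0.le hab hc0
  · have hab' : a ≤ b := fun i => by
      simpa using (le_mratio_smul hb i).trans
        (mul_le_of_le_one_left (hb i).le (not_lt.1 hμ))
    calc Mratio (f a) (f b) ≤ 1 := mratio_le one_pos (by simpa using hf ha hb hab')
      _ ≤ t ^ c := Real.one_le_rpow ht hc0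

theorem stmt4_general {k : ℕ} (U : Set (Fin k → ℝ)) (hU : U ⊆ posOrth k)
    (l₀ : ℝ) (hl₀ : 1 < l₀)
    (hdiam : (∀ x ∈ U, ∀ y ∈ U, dT x y ≤ Real.log l₀) ∧
      ∃ x ∈ U, ∃ y ∈ U, dT x y = Real.log l₀)
    (f : (Fin k → ℝ) → (Fin k → ℝ))
    (hmono : ∀ x ∈ posOrth k, ∀ y ∈ posOrth k, x ≤ y → f x ≤ f y)
    (c : ℝ) (hc0 : 0 ≤ c)
    (hscale : ∀ x ∈ U, ∀ l : ℝ, 1 < l → l ≤ l₀ → f (l • x) ≤ (l ^ c) • f x) :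
    ∀ x ∈ U, ∀ y ∈ U, dT (f x) (f y) ≤ c * dT x y := by
  intro x hx y hy
  rcases isEmpty_or_nonempty (Fin k) with hk | hk
  · simp [dT_of_isEmpty]
  set m := max (Mratio x y) (Mratio y x)
  have hm1 : 1 ≤ m := one_le_max_mratio (hU hx) (hU hy)
  have hml : m ≤ l₀ :=
    max_mratio_le_of_dT_le (hU hx) (hU hy) (zero_lt_one.trans hl₀) (hdiam.1 x hx y hy)
  have hxy : Mratio (f x) (f y) ≤ m ^ c := mratio_map_le_rpow hmono (hscale y hy) hc0
    (hU hx) (hU hy) hm1 (le_max_left _ _) hml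
  have hyx : Mratio (f y) (f x) ≤ m ^ c := mratio_map_le_rpow hmono (hscale x hx) hc0
    (hU hy) (hU hx) hm1 (le_max_right _ _) hml
  calc dT (f x) (f y) ≤ Real.log (m ^ c) := dT_le_log (Real.one_le_rpow hm1 hc0) hxy hyx
    _ = c * dT x y := Real.log_rpow (zero_lt_one.trans_le hm1) c

/-- local version of Lemma 1 (Corollary 2 in the paper). -/
theorem stmt4 {k : ℕ} (U : Set (Fin k → ℝ)) (hU : U ⊆ posOrth k)
    (hUc : IsCompact U)
    (hopen : ∃ V : Set (Fin k → ℝ), IsOpen V ∧ V.Nonempty ∧ V ⊆ U)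
    (l₀ : ℝ) (hl₀ : 1 < l₀)
    (hdiam : (∀ x ∈ U, ∀ y ∈ U, dT x y ≤ Real.log l₀) ∧
      ∃ x ∈ U, ∃ y ∈ U, dT x y = Real.log l₀)
    (f : (Fin k → ℝ) → (Fin k → ℝ))
    (hmap : ∀ x ∈ posOrth k, f x ∈ posOrth k)
    (hmono : ∀ x ∈ posOrth k, ∀ y ∈ posOrth k, x ≤ y → f x ≤ f y)
    (c : ℝ) (hc0 : 0 ≤ c) (hc1 : c < 1)
    (hscale : ∀ x ∈ U, ∀ l : ℝ, 1 < l → l ≤ l₀ → f (l • x) ≤ (l ^ c) • f x) :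
    ∀ x ∈ U, ∀ y ∈ U, dT (f x) (f y) ≤ c * dT x y :=
  stmt4_general U hU l₀ hl₀ hdiam f hmono c hc0 hscale
end

section
/- Let μ ∈ (0,1) and define c(λ) := ln((1−μ)λ + μ) / ln λ for λ > 1. Then c is strictly increasing on (1,∞), satisfies 1 − μ < c(λ) < 1 for all λ > 1, lim_{λ→1⁺} c(λ) = 1 − μ, and lim_{λ→∞} c(λ) = 1. -/
open Filter Topology Set

section aux

variable {μ : ℝ}

lemma g_pos (hμ0 : 0 < μ) (hμ1 : μ < 1) {l : ℝ} (hl : 1 ≤ l) :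
    0 < (1 - μ) * l + μ := by nlinarith

/-- the auxiliary function `h t = log ((1-μ) e^t + μ)` is strictly convex. -/
lemma h_strictConvex (hμ0 : 0 < μ) (hμ1 : μ < 1) :
    StrictConvexOn ℝ univ (fun t : ℝ => Real.log ((1 - μ) * Real.exp t + μ)) := by
  have hgpos : ∀ t : ℝ, 0 < (1 - μ) * Real.exp t + μ := by
    intro t
    have := Real.exp_pos t
    nlinarith
  have hd : ∀ t : ℝ, HasDerivAt (fun t : ℝ => Real.log ((1 - μ) * Real.exp t + μ))
      (1 - μ / ((1 - μ) * Real.exp t + μ)) t := by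
    intro t
    have h1 : HasDerivAt (fun t : ℝ => (1 - μ) * Real.exp t + μ) ((1 - μ) * Real.exp t) t := by
      exact ((Real.hasDerivAt_exp t).const_mul (1 - μ)).add_const μ
    have h2 := h1.log (hgpos t).ne'
    have h3 : (1:ℝ) - μ / ((1 - μ) * Real.exp t + μ)
        = ((1 - μ) * Real.exp t) / ((1 - μ) * Real.exp t + μ) := by
      rw [eq_div_iff (hgpos t).ne', sub_mul, one_mul, div_mul_cancel₀ _ (hgpos t).ne']
      ring
    rw [h3]
    exact h2
  apply StrictMono.strictConvexOn_univ_of_deriv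
  · apply Continuous.log
    · continuity
    · exact fun t => (hgpos t).ne'
  · have hder : deriv (fun t : ℝ => Real.log ((1 - μ) * Real.exp t + μ))
        = fun t => 1 - μ / ((1 - μ) * Real.exp t + μ) := funext fun t => (hd t).deriv
    rw [hder]
    intro s t hst
    have h1 : (1 - μ) * Real.exp s + μ < (1 - μ) * Real.exp t + μ := by
      have := Real.exp_lt_exp.2 hst
      nlinarith
    have h2 : μ / ((1 - μ) * Real.exp t + μ) < μ / ((1 - μ) * Real.exp s + μ) :=
      div_lt_div_of_pos_left hμ0 (hgpos s) h1
    linarith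

end aux

/-- properties of the local contraction factor
c(λ) = ln((1−μ)λ+μ)/ln λ, for μ ∈ (0,1). -/
theorem stmt7 (μ : ℝ) (hμ0 : 0 < μ) (hμ1 : μ < 1) :
    StrictMonoOn (fun l : ℝ => Real.log ((1 - μ) * l + μ) / Real.log l) (Set.Ioi 1) ∧
    (∀ l : ℝ, 1 < l →
      1 - μ < Real.log ((1 - μ) * l + μ) / Real.log l ∧
      Real.log ((1 - μ) * l + μ) / Real.log l < 1) ∧
    Tendsto (fun l : ℝ => Real.log ((1 - μ) * l + μ) / Real.log l)
      (nhdsWithin 1 (Set.Ioi 1)) (nhds (1 - μ)) ∧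
    Tendsto (fun l : ℝ => Real.log ((1 - μ) * l + μ) / Real.log l)
      atTop (nhds 1) := by
  have hg1 : ∀ l : ℝ, 1 < l → 1 < (1 - μ) * l + μ := by intro l hl; nlinarith
  have hgl : ∀ l : ℝ, 1 < l → (1 - μ) * l + μ < l := by intro l hl; nlinarith
  have hlogpos : ∀ l : ℝ, 1 < l → 0 < Real.log l := fun l hl => Real.log_pos hl
  refine ⟨?_, ?_, ?_, ?_⟩
  · -- strict monotonicity via secants of strictly convex h
    intro a ha b hb hab
    simp only [mem_Ioi] at ha hb
    have hla := hlogpos a ha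
    have hlb := hlogpos b hb
    have hlab : Real.log a < Real.log b := Real.log_lt_log (by linarith) hab
    have key := (h_strictConvex hμ0 hμ1).secant_strict_mono (a := 0)
      (x := Real.log a) (y := Real.log b) (mem_univ _) (mem_univ _) (mem_univ _)
      hla.ne' hlb.ne' hlab
    simp only [Real.exp_zero, Real.exp_log (by linarith : (0:ℝ) < a),
      Real.exp_log (by linarith : (0:ℝ) < b), mul_one, sub_zero] at key
    have h0 : Real.log (1 - μ + μ) = 0 := by norm_num
    rw [h0, sub_zero, sub_zero] at key
    exact key
  · intro l hl
    have hlp := hlogpos l hl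
    constructor
    · -- lower bound via strict concavity of log
      rw [lt_div_iff₀ hlp]
      have := strictConcaveOn_log_Ioi.2 (mem_Ioi.2 (by linarith : (0:ℝ) < l))
        (mem_Ioi.2 one_pos) (by linarith : l ≠ 1) (by linarith : 0 < 1 - μ) hμ0 (by ring)
      simpa [Real.log_one, smul_eq_mul] using this
    · rw [div_lt_one hlp]
      exact Real.log_lt_log (g_pos hμ0 hμ1 hl.le) (hgl l hl)
  · -- limit as l → 1⁺
    have hf1 : HasDerivAt (fun l : ℝ => Real.log ((1 - μ) * l + μ)) (1 - μ) 1 := by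
      have h1 : HasDerivAt (fun l : ℝ => (1 - μ) * l + μ) (1 - μ) 1 := by
        simpa using ((hasDerivAt_id (1:ℝ)).const_mul (1 - μ)).add_const μ
      have h2 := h1.log (by norm_num : (1 - μ) * 1 + μ ≠ 0)
      convert h2 using 1
      norm_num
    have hf2 : HasDerivAt Real.log 1 1 := by
      simpa using Real.hasDerivAt_log one_ne_zero
    have t1 : Tendsto (slope (fun l : ℝ => Real.log ((1 - μ) * l + μ)) 1)
        (nhdsWithin 1 (Set.Ioi 1)) (nhds (1 - μ)) :=
      ((hasDerivAt_iff_tendsto_slope.1 hf1).mono_left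
        (nhdsWithin_mono _ (fun x hx => ne_of_gt hx)))
    have t2 : Tendsto (slope Real.log 1) (nhdsWithin 1 (Set.Ioi 1)) (nhds 1) :=
      ((hasDerivAt_iff_tendsto_slope.1 hf2).mono_left
        (nhdsWithin_mono _ (fun x hx => ne_of_gt hx)))
    have := t1.div t2 one_ne_zero
    rw [div_one] at this
    refine this.congr' ?_
    filter_upwards [self_mem_nhdsWithin] with l hl
    simp only [mem_Ioi] at hl
    have hne : l - 1 ≠ 0 := sub_ne_zero.2 (ne_of_gt hl)
    simp only [Pi.div_apply]
    rw [slope_def_field, slope_def_field]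
    have h0 : Real.log ((1 - μ) * 1 + μ) = 0 := by norm_num
    rw [h0, Real.log_one, sub_zero, sub_zero]
    rw [div_div_div_eq, mul_comm (l-1) (Real.log l), mul_div_mul_right _ _ hne]
  · -- limit at infinity
    have t1 : Tendsto (fun l : ℝ => (1 - μ) + μ / l) atTop (nhds (1 - μ)) := by
      simpa using tendsto_const_nhds.add
        (Tendsto.div_atTop (tendsto_const_nhds (x := μ)) tendsto_id)
    have t2 : Tendsto (fun l : ℝ => Real.log ((1 - μ) + μ / l)) atTop
        (nhds (Real.log (1 - μ))) :=
      (Real.continuousAt_log (by linarith : (1:ℝ) - μ ≠ 0)).tendsto.comp t1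
    have t3 : Tendsto (fun l : ℝ => (Real.log l)⁻¹) atTop (nhds 0) :=
      Real.tendsto_log_atTop.inv_tendsto_atTop
    have t4 : Tendsto (fun l : ℝ => 1 + Real.log ((1 - μ) + μ / l) * (Real.log l)⁻¹)
        atTop (nhds 1) := by
      have := t2.mul t3
      rw [mul_zero] at this
      simpa using tendsto_const_nhds.add this
    refine t4.congr' ?_
    filter_upwards [eventually_gt_atTop 1] with l hl
    have hl0 : (0:ℝ) < l := by linarith
    have hlp := Real.log_pos hl
    have hsplit : (1 - μ) * l + μ = l * ((1 - μ) + μ / l) := by field_simp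
    have hpos : (0:ℝ) < (1 - μ) + μ / l := by
      have h2 : 0 < μ / l := div_pos hμ0 hl0
      linarith
    rw [hsplit, Real.log_mul hl0.ne' hpos.ne']
    field_simp
end

section
/- Let f : int(ℝ_+^k) → int(ℝ_+^k) be a c-Lipschitz contraction with respect to Thompson's metric with c ∈ [0,1), and let x* ∈ int(ℝ_+^k) be its unique fixed point. Then for any starting point x₁ ∈ int(ℝ_+^k), the fixed point iteration x_{n+1} = f(x_n) converges geometrically to x* with factor c with respect to any norm on ℝ^k: there exists γ > 0 such that ‖x_{n+1} − x*‖ ≤ γ c^n for all n ∈ ℕ. -/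
open Filter Topology Set

lemma Mratio_spec {k : ℕ} (hk : 0 < k) {x y : Fin k → ℝ}
    (hx : x ∈ posOrth k) (hy : y ∈ posOrth k) :
    0 < Mratio x y ∧ ∀ i, x i ≤ Mratio x y * y i := by
  classical
  have hi₀ : Nonempty (Fin k) := ⟨⟨0, hk⟩⟩
  obtain ⟨i₀⟩ := hi₀
  have hne : {β : ℝ | 0 < β ∧ ∀ i, x i ≤ β * y i}.Nonempty := by
    refine ⟨Finset.univ.sup' ⟨i₀, Finset.mem_univ i₀⟩ fun i => x i / y i, ?_, ?_⟩
    · exact lt_of_lt_of_le (div_pos (hx i₀) (hy i₀))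
        (Finset.le_sup' (fun i => x i / y i) (Finset.mem_univ i₀))
    · intro i
      have h := Finset.le_sup' (fun i => x i / y i) (Finset.mem_univ i)
      exact (div_le_iff₀ (hy i)).mp h
  have key : ∀ i, x i / y i ≤ Mratio x y := by
    intro i
    apply le_csInf hne
    rintro β ⟨hβ, hβ2⟩
    exact (div_le_iff₀ (hy i)).mpr (hβ2 i)
  refine ⟨lt_of_lt_of_le (div_pos (hx i₀) (hy i₀)) (key i₀), fun i => ?_⟩
  exact (div_le_iff₀ (hy i)).mp (key i)

lemma one_le_max_Mratio {k : ℕ} (hk : 0 < k) {x y : Fin k → ℝ}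
    (hx : x ∈ posOrth k) (hy : y ∈ posOrth k) :
    1 ≤ max (Mratio x y) (Mratio y x) := by
  obtain ⟨hA, hA2⟩ := Mratio_spec hk hx hy
  obtain ⟨hB, hB2⟩ := Mratio_spec hk hy hx
  set A := Mratio x y
  set B := Mratio y x
  have i₀ : Fin k := ⟨0, hk⟩
  have h1 : x i₀ ≤ A * (B * x i₀) := le_trans (hA2 i₀) (by nlinarith [hB2 i₀])
  have hAB : 1 ≤ A * B := by nlinarith [hx i₀]
  by_contra h
  push_neg at h
  rw [max_lt_iff] at h
  nlinarith [h.1, h.2]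

/-- Proposition 4: a c-Lipschitz contraction w.r.t. Thompson's metric
has its fixed point iteration converging geometrically with factor c in norm. -/
theorem stmt8 {k : ℕ} (f : (Fin k → ℝ) → (Fin k → ℝ))
    (hmap : ∀ x ∈ posOrth k, f x ∈ posOrth k)
    (c : ℝ) (hc0 : 0 ≤ c) (hc1 : c < 1)
    (hcontr : ∀ x ∈ posOrth k, ∀ y ∈ posOrth k, dT (f x) (f y) ≤ c * dT x y)
    (xstar : Fin k → ℝ) (hxstar : xstar ∈ posOrth k) (hfix : f xstar = xstar)
    (x : ℕ → Fin k → ℝ) (hx0 : x 0 ∈ posOrth k)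
    (hiter : ∀ n, x (n + 1) = f (x n)) :
    ∃ γ : ℝ, 0 < γ ∧ ∀ n : ℕ, ‖x n - xstar‖ ≤ γ * c ^ n := by
  rcases Nat.eq_zero_or_pos k with hk | hk
  · subst hk
    refine ⟨1, one_pos, fun n => ?_⟩
    have : x n - xstar = 0 := Subsingleton.elim _ _
    rw [this, norm_zero, one_mul]
    exact pow_nonneg hc0 n
  -- positivity of the orbit
  have hpos : ∀ n, x n ∈ posOrth k := by
    intro n
    induction n with
    | zero => exact hx0
    | succ m ih => rw [hiter m]; exact hmap _ ih
  set d : ℕ → ℝ := fun n => dT (x n) xstar with hd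
  have hmax1 : ∀ n, 1 ≤ max (Mratio (x n) xstar) (Mratio xstar (x n)) :=
    fun n => one_le_max_Mratio hk (hpos n) hxstar
  have hd0 : ∀ n, 0 ≤ d n := fun n => Real.log_nonneg (hmax1 n)
  have hexp : ∀ n, Real.exp (d n) = max (Mratio (x n) xstar) (Mratio xstar (x n)) :=
    fun n => Real.exp_log (lt_of_lt_of_le one_pos (hmax1 n))
  -- geometric decay of Thompson distance
  have hdc : ∀ n, d n ≤ c ^ n * d 0 := by
    intro n
    induction n with
    | zero => simp
    | succ m ih =>
      have h1 : d (m + 1) ≤ c * d m := by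
        have := hcontr (x m) (hpos m) xstar hxstar
        rw [hfix] at this
        simpa [hd, hiter m] using this
      calc d (m + 1) ≤ c * d m := h1
        _ ≤ c * (c ^ m * d 0) := by
            exact mul_le_mul_of_nonneg_left ih hc0
        _ = c ^ (m + 1) * d 0 := by ring
  -- componentwise bounds
  have hcomp : ∀ n i, |x n i - xstar i| ≤ (Real.exp (d n) - 1) * xstar i := by
    intro n i
    obtain ⟨hA, hA2⟩ := Mratio_spec hk (hpos n) hxstar
    obtain ⟨hB, hB2⟩ := Mratio_spec hk hxstar (hpos n)
    have hAle : Mratio (x n) xstar ≤ Real.exp (d n) := by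
      rw [hexp n]; exact le_max_left _ _
    have hBle : Mratio xstar (x n) ≤ Real.exp (d n) := by
      rw [hexp n]; exact le_max_right _ _
    have hup : x n i ≤ Real.exp (d n) * xstar i :=
      le_trans (hA2 i) (mul_le_mul_of_nonneg_right hAle (le_of_lt (hxstar i)))
    have hdown : xstar i ≤ Real.exp (d n) * x n i :=
      le_trans (hB2 i) (mul_le_mul_of_nonneg_right hBle (le_of_lt ((hpos n) i)))
    have he1 : 1 ≤ Real.exp (d n) := Real.one_le_exp (hd0 n)
    rw [abs_le]
    constructor
    · -- -(e^d - 1) x* ≤ x n - x*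
      nlinarith [hxstar i, (hpos n) i]
    · nlinarith [hxstar i]
  set D := d 0 with hD
  refine ⟨Real.exp D * D * ‖xstar‖ + 1, ?_, fun n => ?_⟩
  · have h := mul_nonneg (mul_nonneg (Real.exp_pos D).le (hd0 0)) (norm_nonneg xstar)
    rw [hD] at h ⊢
    linarith
  have hcn1 : c ^ n ≤ 1 := pow_le_one₀ hc0 (le_of_lt hc1)
  have hcn0 : 0 ≤ c ^ n := pow_nonneg hc0 n
  have hdnD : d n ≤ D := le_trans (hdc n) (by nlinarith [hd0 0])
  have heD : Real.exp (d n) ≤ Real.exp D := Real.exp_le_exp.mpr hdnD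
  -- e^{d n} - 1 ≤ d n * e^{d n} ≤ (c^n D) e^D
  have hexp_sub : Real.exp (d n) - 1 ≤ c ^ n * D * Real.exp D := by
    have h1 : 1 - d n ≤ Real.exp (-(d n)) := by
      have := Real.add_one_le_exp (-(d n)); linarith
    have h2 : Real.exp (-(d n)) * Real.exp (d n) = 1 := by
      rw [← Real.exp_add]; simp
    have hepos : 0 < Real.exp (d n) := Real.exp_pos _
    have h3 : Real.exp (d n) - 1 ≤ d n * Real.exp (d n) := by nlinarith
    calc Real.exp (d n) - 1 ≤ d n * Real.exp (d n) := h3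
      _ ≤ (c ^ n * D) * Real.exp D := by
          have := hdc n
          nlinarith [hd0 n, Real.exp_pos D]
      _ = c ^ n * D * Real.exp D := by ring
  have hbound : ‖x n - xstar‖ ≤ (Real.exp (d n) - 1) * ‖xstar‖ := by
    have hnn : 0 ≤ (Real.exp (d n) - 1) * ‖xstar‖ := by
      have h := Real.one_le_exp (hd0 n)
      exact mul_nonneg (by linarith) (norm_nonneg _)
    rw [pi_norm_le_iff_of_nonneg hnn]
    intro i
    have h1 := hcomp n i
    have h2 : xstar i ≤ ‖xstar‖ := le_trans (le_abs_self _) (norm_le_pi_norm xstar i)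
    have h3 : 0 ≤ Real.exp (d n) - 1 := by
      have := Real.one_le_exp (hd0 n); linarith
    calc ‖(x n - xstar) i‖ = |x n i - xstar i| := by simp [Real.norm_eq_abs]
      _ ≤ (Real.exp (d n) - 1) * xstar i := h1
      _ ≤ (Real.exp (d n) - 1) * ‖xstar‖ := mul_le_mul_of_nonneg_left h2 h3
  calc ‖x n - xstar‖ ≤ (Real.exp (d n) - 1) * ‖xstar‖ := hbound
    _ ≤ (c ^ n * D * Real.exp D) * ‖xstar‖ := by
        exact mul_le_mul_of_nonneg_right hexp_sub (norm_nonneg _)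
    _ ≤ (Real.exp D * D * ‖xstar‖ + 1) * c ^ n := by nlinarith
end

section
/- Let f : ℝ_+^k → int(ℝ_+^k) be a continuous concave mapping (positive concave mapping) with a fixed point x* ∈ int(ℝ_+^k). Then for any starting point x₁ ∈ ℝ_+^k, the sequence defined by x_{n+1} = f(x_n) converges geometrically to x*: there exist c ∈ [0,1) and γ > 0 such that ‖x_{n+1} − x*‖ ≤ γ c^n for all n ∈ ℕ, for any norm ‖·‖ on ℝ^k. -/
open Filter Topology Set

/-!
Concavity and positivity make `f` monotone on the orthant. Pick `δ ∈ (0, 1]` with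
`δ • x* ≤ f 0`. Concavity along the segment from `0` to a multiple of `x*` then shows that if
`a • x* ≤ y ≤ b • x*` with `a ≤ 1 ≤ b`, the gaps `1 - a` and `b - 1` both shrink by the factor
`1 - δ` when `y` is replaced by `f y`. Starting from `0 • x* ≤ x 0 ≤ β • x*`, the iterates are
squeezed towards `x*` at the geometric rate `1 - δ`.
-/

lemma le_of_forall_pos_lt_one_mul_le {a b : ℝ} (h : ∀ t, 0 < t → t < 1 → t * a ≤ b) :
    a ≤ b := by
  have hlim : Tendsto (fun t : ℝ => t * a) (𝓝[<] 1) (𝓝 a) := by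
    simpa using (tendsto_id.mul_const a (x := 𝓝 (1 : ℝ))).mono_left nhdsWithin_le_nhds
  refine le_of_tendsto hlim ?_
  filter_upwards [Ioo_mem_nhdsLT one_pos] with t ht using h t ht.1 ht.2

lemma norm_sub_le_of_smul_le_of_le_smul {ι : Type*} [Fintype ι] {r : ℝ} {x y : ι → ℝ}
    (hr : 0 ≤ r) (hlow : (1 - r) • x ≤ y) (hhigh : y ≤ (1 + r) • x) : ‖y - x‖ ≤ r * ‖x‖ := by
  refine (pi_norm_le_iff_of_nonneg (by positivity)).mpr fun i => ?_
  have hxi : x i ≤ ‖x‖ := (le_abs_self _).trans (norm_le_pi_norm x i)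
  have hl : (1 - r) * x i ≤ y i := hlow i
  have hh : y i ≤ (1 + r) * x i := hhigh i
  rw [Pi.sub_apply, Real.norm_eq_abs, abs_le]
  constructor <;> nlinarith

section Orthant

variable {k : ℕ}

lemma zero_mem_nonnegOrth : (0 : Fin k → ℝ) ∈ nonnegOrth k := fun _ => le_rfl

lemma convex_nonnegOrth : Convex ℝ (nonnegOrth k) := convex_Ici 0

lemma smul_mem_nonnegOrth {a : ℝ} {x : Fin k → ℝ} (ha : 0 ≤ a) (hx : x ∈ nonnegOrth k) :
    a • x ∈ nonnegOrth k := fun i => mul_nonneg ha (hx i)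

lemma exists_le_smul_of_mem_posOrth {y z : Fin k → ℝ} (hy : y ∈ posOrth k)
    (hz : z ∈ nonnegOrth k) : ∃ β : ℝ, 1 ≤ β ∧ z ≤ β • y := by
  have hq : ∀ i, 0 ≤ z i / y i := fun i => div_nonneg (hz i) (hy i).le
  have hsum : 0 ≤ ∑ i, z i / y i := Finset.sum_nonneg fun i _ => hq i
  refine ⟨1 + ∑ i, z i / y i, by linarith, fun i => ?_⟩
  have hi : z i / y i ≤ 1 + ∑ j, z j / y j := by
    linarith [Finset.single_le_sum (fun j _ => hq j) (Finset.mem_univ i)]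
  simpa [div_le_iff₀ (hy i)] using hi

lemma exists_smul_le_of_mem_posOrth {y z : Fin k → ℝ} (hy : y ∈ posOrth k)
    (hz : z ∈ nonnegOrth k) : ∃ δ : ℝ, 0 < δ ∧ δ ≤ 1 ∧ δ • z ≤ y := by
  obtain ⟨β, hβ, hzβ⟩ := exists_le_smul_of_mem_posOrth hy hz
  have hβ0 : 0 < β := by linarith
  refine ⟨β⁻¹, inv_pos.mpr hβ0, inv_le_one_of_one_le₀ hβ, ?_⟩
  calc β⁻¹ • z ≤ β⁻¹ • β • y := smul_le_smul_of_nonneg_left hzβ (inv_nonneg.mpr hβ0.le)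
    _ = y := inv_smul_smul₀ hβ0.ne' y

end Orthant

section Concave

variable {k : ℕ} {f : (Fin k → ℝ) → Fin k → ℝ}

lemma concaveOn_nonnegOrth_of_forall_lt
    (hconc : ∀ x ∈ nonnegOrth k, ∀ y ∈ nonnegOrth k, ∀ t : ℝ, 0 < t → t < 1 →
      t • f x + (1 - t) • f y ≤ f (t • x + (1 - t) • y)) :
    ConcaveOn ℝ (nonnegOrth k) f := by
  refine concaveOn_iff_forall_pos.mpr ⟨convex_nonnegOrth, fun x hx y hy a b ha hb hab => ?_⟩
  obtain rfl : b = 1 - a := by linarith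
  exact hconc x hx y hy a ha (by linarith)

/-- Writing `z = t • y + (1 - t) • w` with `w ≥ 0` gives `t • f y ≤ f z` for every `t < 1`. -/
lemma ConcaveOn.monotoneOn_nonnegOrth (hf : ConcaveOn ℝ (nonnegOrth k) f)
    (hmaps : MapsTo f (nonnegOrth k) (nonnegOrth k)) : MonotoneOn f (nonnegOrth k) := by
  intro y hy z _ hyz i
  refine le_of_forall_pos_lt_one_mul_le fun t ht0 ht1 => ?_
  have h1t : 0 < 1 - t := by linarith
  set w := (1 - t)⁻¹ • (z - t • y)
  have hw : w ∈ nonnegOrth k := fun j => by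
    have : t * y j ≤ z j := by nlinarith [hy j, hyz j]
    exact mul_nonneg (inv_nonneg.mpr h1t.le) (by simpa [smul_eq_mul] using this)
  have hz_eq : t • y + (1 - t) • w = z := by
    simp only [w, smul_smul, mul_inv_cancel₀ h1t.ne', one_smul]
    abel
  have hconc := (hf.2 hy hw ht0.le h1t.le (by ring)) i
  rw [hz_eq] at hconc
  simp only [Pi.add_apply, Pi.smul_apply, smul_eq_mul] at hconc
  nlinarith [hmaps hw i]

variable (hf : ConcaveOn ℝ (nonnegOrth k) f) (hmono : MonotoneOn f (nonnegOrth k))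
  {xs : Fin k → ℝ} (hxs : xs ∈ nonnegOrth k) (hfix : f xs = xs) {δ : ℝ} (hδ : δ • xs ≤ f 0)
include hf hmono hxs hfix hδ

lemma smul_le_apply_of_smul_le {a : ℝ} (ha0 : 0 ≤ a) (ha1 : a ≤ 1) {y : Fin k → ℝ}
    (hy : y ∈ nonnegOrth k) (hay : a • xs ≤ y) : (1 - (1 - δ) * (1 - a)) • xs ≤ f y := by
  have h1a : 0 ≤ 1 - a := by linarith
  calc (1 - (1 - δ) * (1 - a)) • xs = a • xs + (1 - a) • δ • xs := by module
    _ ≤ a • f xs + (1 - a) • f 0 := by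
        rw [hfix]; exact add_le_add le_rfl (smul_le_smul_of_nonneg_left hδ h1a)
    _ ≤ f (a • xs + (1 - a) • 0) := hf.2 hxs zero_mem_nonnegOrth ha0 h1a (by ring)
    _ = f (a • xs) := by rw [smul_zero, add_zero]
    _ ≤ f y := hmono (smul_mem_nonnegOrth ha0 hxs) hy hay

lemma apply_le_smul_of_le_smul {b : ℝ} (hb : 1 ≤ b) {y : Fin k → ℝ}
    (hy : y ∈ nonnegOrth k) (hyb : y ≤ b • xs) : f y ≤ (1 + (1 - δ) * (b - 1)) • xs := by
  have hb0 : 0 < b := by linarith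
  have hbx : b • xs ∈ nonnegOrth k := smul_mem_nonnegOrth hb0.le hxs
  have hconc := hf.2 hbx zero_mem_nonnegOrth (inv_nonneg.mpr hb0.le)
    (sub_nonneg.mpr (inv_le_one_of_one_le₀ hb)) (add_sub_cancel _ _)
  rw [smul_smul, inv_mul_cancel₀ hb0.ne', one_smul, smul_zero, add_zero, hfix] at hconc
  have hbconc : f (b • xs) + (b - 1) • f 0 ≤ b • xs := by
    have := smul_le_smul_of_nonneg_left hconc hb0.le
    rwa [smul_add, smul_smul, smul_smul, mul_inv_cancel₀ hb0.ne', one_smul, mul_sub, mul_one,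
      mul_inv_cancel₀ hb0.ne'] at this
  calc f y ≤ f (b • xs) := hmono hy hbx hyb
    _ ≤ b • xs - (b - 1) • f 0 := le_sub_iff_add_le.mpr hbconc
    _ ≤ b • xs - (b - 1) • δ • xs :=
        sub_le_sub_left (smul_le_smul_of_nonneg_left hδ (by linarith)) _
    _ = (1 + (1 - δ) * (b - 1)) • xs := by module

lemma iterate_sandwich (hδ0 : 0 ≤ δ) (hδ1 : δ ≤ 1) {β : ℝ} (hβ : 1 ≤ β)
    {u : ℕ → Fin k → ℝ} (hu0 : u 0 ∈ nonnegOrth k) (hu0β : u 0 ≤ β • xs)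
    (hu : ∀ n, u (n + 1) = f (u n)) (n : ℕ) :
    (1 - (1 - δ) ^ n) • xs ≤ u n ∧ u n ≤ (1 + (β - 1) * (1 - δ) ^ n) • xs := by
  induction n with
  | zero => simpa using ⟨hu0, hu0β⟩
  | succ n ih =>
    have hc0 : 0 ≤ (1 - δ) ^ n := pow_nonneg (by linarith) n
    have hc1 : (1 - δ) ^ n ≤ 1 := pow_le_one₀ (by linarith) (by linarith)
    have hmem : u n ∈ nonnegOrth k := fun i =>
      (smul_mem_nonnegOrth (by linarith) hxs i).trans (ih.1 i)
    rw [hu]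
    constructor
    · convert smul_le_apply_of_smul_le hf hmono hxs hfix hδ (by linarith) (by linarith) hmem ih.1
        using 2
      ring
    · convert apply_le_smul_of_le_smul hf hmono hxs hfix hδ
        (by nlinarith : 1 ≤ 1 + (β - 1) * (1 - δ) ^ n) hmem ih.2 using 2
      ring

end Concave

theorem stmt9_general {k : ℕ} (f : (Fin k → ℝ) → (Fin k → ℝ))
    (hpos : ∀ x ∈ nonnegOrth k, f x ∈ posOrth k)
    (hconc : ∀ x ∈ nonnegOrth k, ∀ y ∈ nonnegOrth k, ∀ t : ℝ, 0 < t → t < 1 →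
      t • f x + (1 - t) • f y ≤ f (t • x + (1 - t) • y))
    (xstar : Fin k → ℝ) (hxstar : xstar ∈ posOrth k) (hfix : f xstar = xstar)
    (x : ℕ → Fin k → ℝ) (hx0 : x 0 ∈ nonnegOrth k)
    (hiter : ∀ n, x (n + 1) = f (x n)) :
    ∃ c : ℝ, 0 ≤ c ∧ c < 1 ∧ ∃ γ : ℝ, 0 < γ ∧
      ∀ n : ℕ, ‖x n - xstar‖ ≤ γ * c ^ n := by
  have hmaps : MapsTo f (nonnegOrth k) (nonnegOrth k) := fun y hy i => (hpos y hy i).le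
  have hf := concaveOn_nonnegOrth_of_forall_lt hconc
  have hxs : xstar ∈ nonnegOrth k := fun i => (hxstar i).le
  obtain ⟨δ, hδ0, hδ1, hδ⟩ := exists_smul_le_of_mem_posOrth (hpos 0 zero_mem_nonnegOrth) hxs
  obtain ⟨β, hβ, hx0β⟩ := exists_le_smul_of_mem_posOrth hxstar hx0
  refine ⟨1 - δ, by linarith, by linarith, β * ‖xstar‖ + 1, by positivity, fun n => ?_⟩
  obtain ⟨hlow, hhigh⟩ := iterate_sandwich hf (hf.monotoneOn_nonnegOrth hmaps) hxs hfix hδ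
    hδ0.le hδ1 hβ hx0 hx0β hiter n
  have hc0 : 0 ≤ (1 - δ) ^ n := pow_nonneg (by linarith) n
  calc ‖x n - xstar‖ ≤ β * (1 - δ) ^ n * ‖xstar‖ := by
        refine norm_sub_le_of_smul_le_of_le_smul (by positivity)
          ((smul_le_smul_of_nonneg_right ?_ hxs).trans hlow)
          (hhigh.trans (smul_le_smul_of_nonneg_right ?_ hxs)) <;> nlinarith
    _ ≤ (β * ‖xstar‖ + 1) * (1 - δ) ^ n := by nlinarith

/-- Proposition 5, main result: the fixed point iteration of a continuous
positive concave mapping with a fixed point converges geometrically for any start. -/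
theorem stmt9 {k : ℕ} (f : (Fin k → ℝ) → (Fin k → ℝ))
    (hpos : ∀ x ∈ nonnegOrth k, f x ∈ posOrth k)
    (hcont : ContinuousOn f (nonnegOrth k))
    (hconc : ∀ x ∈ nonnegOrth k, ∀ y ∈ nonnegOrth k, ∀ t : ℝ, 0 < t → t < 1 →
      t • f x + (1 - t) • f y ≤ f (t • x + (1 - t) • y))
    (xstar : Fin k → ℝ) (hxstar : xstar ∈ posOrth k) (hfix : f xstar = xstar)
    (x : ℕ → Fin k → ℝ) (hx0 : x 0 ∈ nonnegOrth k)
    (hiter : ∀ n, x (n + 1) = f (x n)) :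
    ∃ c : ℝ, 0 ≤ c ∧ c < 1 ∧ ∃ γ : ℝ, 0 < γ ∧
      ∀ n : ℕ, ‖x n - xstar‖ ≤ γ * c ^ n :=
  stmt9_general f hpos hconc xstar hxstar hfix x hx0 hiter
end

section
/- Let f : ℝ_+^k → int(ℝ_+^k) be a concave mapping with respect to the cone order. Then f is a standard interference mapping: it is monotonic (x ≤ y ⟹ f(x) ≤ f(y)) and scalable (for every x ∈ ℝ_+^k and λ > 1, f(λx) ≪ λ f(x), where ≪ denotes strict coordinatewise inequality). -/
/-! If `x ≤ y`, then for every `t ∈ (0, 1)` the point `y` is the convex combination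
`t • z + (1 - t) • x` with `z = x + t⁻¹ • (y - x)` still in the cone, so concavity and a lower
bound `m` for `f` give `(1 - t) f x + t m ≤ f y`; letting `t → 0` yields `f x ≤ f y`.
For scalability write `x = λ⁻¹ • (λ • x) + (1 - λ⁻¹) • 0`: concavity gives
`f (λ • x) + (λ - 1) f 0 ≤ λ f x`, and `f 0` is strictly positive. -/

open Filter Topology Set

theorem concaveOn_of_forall_mem_Ioo {E β : Type*} [AddCommGroup E] [Module ℝ E]
    [AddCommMonoid β] [PartialOrder β] [Module ℝ β] {s : Set E} {f : E → β} (hs : Convex ℝ s)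
    (hf : ∀ x ∈ s, ∀ y ∈ s, ∀ t : ℝ, 0 < t → t < 1 →
      t • f x + (1 - t) • f y ≤ f (t • x + (1 - t) • y)) :
    ConcaveOn ℝ s f := by
  refine concaveOn_iff_forall_pos.2 ⟨hs, fun x hx y hy a b ha hb hab => ?_⟩
  obtain rfl : b = 1 - a := by linarith
  exact hf x hx y hy a ha (by linarith)

theorem ConcaveOn.apply {E ι : Type*} [AddCommGroup E] [Module ℝ E] {s : Set E}
    {f : E → ι → ℝ} (hf : ConcaveOn ℝ s f) (i : ι) : ConcaveOn ℝ s (f · i) :=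
  ⟨hf.1, fun _ hx _ hy _ _ ha hb hab => hf.2 hx hy ha hb hab i⟩

section RealValued

variable {E : Type*} [AddCommGroup E] [Module ℝ E] {s : Set E} {g : E → ℝ}

theorem ConcaveOn.monotoneOn_of_bddBelow [PartialOrder E] [IsOrderedAddMonoid E]
    [PosSMulMono ℝ E] (hg : ConcaveOn ℝ s g) (hs : IsUpperSet s) (hbdd : BddBelow (g '' s)) :
    MonotoneOn g s := by
  intro x hx y hy hxy
  obtain ⟨m, hm⟩ := hbdd
  have key : ∀ t ∈ Ioo (0 : ℝ) 1, (1 - t) * g x + t * m ≤ g y := by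
    rintro t ⟨ht0, ht1⟩
    set z := x + t⁻¹ • (y - x)
    have hz : z ∈ s :=
      hs (le_add_of_nonneg_right (smul_nonneg (inv_nonneg.2 ht0.le) (sub_nonneg.2 hxy))) hx
    have hyz : t • z + (1 - t) • x = y := by
      simp only [z, smul_add, smul_smul, mul_inv_cancel₀ ht0.ne', one_smul]
      module
    calc (1 - t) * g x + t * m ≤ t * g z + (1 - t) * g x := by
          linarith [mul_le_mul_of_nonneg_left (hm ⟨z, hz, rfl⟩) ht0.le]
      _ ≤ g (t • z + (1 - t) • x) := hg.2 hz hx ht0.le (by linarith) (by ring)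
      _ = g y := by rw [hyz]
  have hlim : Tendsto (fun t => (1 - t) * g x + t * m) (𝓝[>] 0) (𝓝 (g x)) := by
    have hcont : Continuous fun t : ℝ => (1 - t) * g x + t * m := by fun_prop
    simpa using (hcont.tendsto 0).mono_left nhdsWithin_le_nhds
  exact le_of_tendsto hlim (eventually_of_mem (Ioo_mem_nhdsGT one_pos) key)

theorem ConcaveOn.apply_smul_lt_mul (hg : ConcaveOn ℝ s g) (h0 : (0 : E) ∈ s) {x : E} {l : ℝ}
    (hlx : l • x ∈ s) (hg0 : 0 < g 0) (hl : 1 < l) : g (l • x) < l * g x := by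
  have hl0 : 0 < l := by linarith
  have h := hg.2 hlx h0 (inv_nonneg.2 hl0.le) (sub_nonneg.2 (inv_le_one_of_one_le₀ hl.le))
    (add_sub_cancel _ _)
  rw [smul_zero, add_zero, smul_smul, inv_mul_cancel₀ hl0.ne', one_smul, smul_eq_mul,
    smul_eq_mul] at h
  calc g (l • x) = l * (l⁻¹ * g (l • x) + (1 - l⁻¹) * g 0) - (l - 1) * g 0 := by
        field_simp; ring
    _ ≤ l * g x - (l - 1) * g 0 := by gcongr
    _ < l * g x := sub_lt_self _ (mul_pos (by linarith) hg0)

end RealValued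

theorem nonnegOrth_eq_Ici (k : ℕ) : nonnegOrth k = Ici 0 := rfl

/-- Fact 3: a positive concave mapping is a standard interference
mapping: monotone and scalable. -/
theorem stmt10 {k : ℕ} (f : (Fin k → ℝ) → (Fin k → ℝ))
    (hpos : ∀ x ∈ nonnegOrth k, f x ∈ posOrth k)
    (hconc : ∀ x ∈ nonnegOrth k, ∀ y ∈ nonnegOrth k, ∀ t : ℝ, 0 < t → t < 1 →
      t • f x + (1 - t) • f y ≤ f (t • x + (1 - t) • y)) :
    (∀ x ∈ nonnegOrth k, ∀ y ∈ nonnegOrth k, x ≤ y → f x ≤ f y) ∧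
    (∀ x ∈ nonnegOrth k, ∀ l : ℝ, 1 < l → ∀ i, f (l • x) i < l * f x i) := by
  rw [nonnegOrth_eq_Ici] at hpos hconc ⊢
  have hf (i : Fin k) : ConcaveOn ℝ (Ici 0) (f · i) :=
    (concaveOn_of_forall_mem_Ioo (convex_Ici 0) hconc).apply i
  have h0 : (0 : Fin k → ℝ) ∈ Ici 0 := mem_Ici.2 le_rfl
  refine ⟨fun x hx y hy hxy i => ?_, fun x hx l hl i => ?_⟩
  · refine (hf i).monotoneOn_of_bddBelow (isUpperSet_Ici 0) ⟨0, ?_⟩ hx hy hxy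
    rintro _ ⟨z, hz, rfl⟩
    exact (hpos z hz i).le
  · have hlx : l • x ∈ Ici 0 := mem_Ici.2 (smul_nonneg (zero_le_one.trans hl.le) hx)
    exact (hf i).apply_smul_lt_mul h0 hlx (hpos 0 h0 i) hl
end

section
/- Let f : ℝ_+^k → int(ℝ_+^k) be a standard interference mapping. Then the restriction of f to int(ℝ_+^k) is a para-contraction with respect to Thompson's metric: for all x, y ∈ int(ℝ_+^k) with x ≠ y, d_T(f(x), f(y)) < d_T(x, y). -/
open Filter Topology Set

lemma mratio_eq_sup {k : ℕ} [Nonempty (Fin k)] (x y : Fin k → ℝ)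
    (hx : ∀ i, 0 < x i) (hy : ∀ i, 0 < y i) :
    Mratio x y = Finset.univ.sup' Finset.univ_nonempty (fun i => x i / y i) := by
  set m := Finset.univ.sup' Finset.univ_nonempty (fun i => x i / y i) with hm
  obtain ⟨i0⟩ := ‹Nonempty (Fin k)›
  have hmpos : 0 < m :=
    lt_of_lt_of_le (div_pos (hx i0) (hy i0))
      (Finset.le_sup' (fun i => x i / y i) (Finset.mem_univ i0))
  have hset : {β : ℝ | 0 < β ∧ ∀ i, x i ≤ β * y i} = Set.Ici m := by
    ext β
    simp only [Set.mem_setOf_eq, Set.mem_Ici]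
    constructor
    · rintro ⟨hβ, h⟩
      exact Finset.sup'_le _ _ (fun i _ => (div_le_iff₀ (hy i)).2 (h i))
    · intro h
      refine ⟨hmpos.trans_le h, fun i => ?_⟩
      have hle : x i / y i ≤ m := Finset.le_sup' (fun i => x i / y i) (Finset.mem_univ i)
      exact (div_le_iff₀ (hy i)).1 (hle.trans h)
  rw [Mratio, hset, csInf_Ici]

lemma mratio_pos {k : ℕ} [Nonempty (Fin k)] (x y : Fin k → ℝ)
    (hx : ∀ i, 0 < x i) (hy : ∀ i, 0 < y i) : 0 < Mratio x y := by
  rw [mratio_eq_sup x y hx hy]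
  obtain ⟨i0⟩ := ‹Nonempty (Fin k)›
  exact lt_of_lt_of_le (div_pos (hx i0) (hy i0))
    (Finset.le_sup' (fun i => x i / y i) (Finset.mem_univ i0))

lemma le_mratio_mul {k : ℕ} [Nonempty (Fin k)] (x y : Fin k → ℝ)
    (hx : ∀ i, 0 < x i) (hy : ∀ i, 0 < y i) (i : Fin k) :
    x i ≤ Mratio x y * y i := by
  rw [mratio_eq_sup x y hx hy]
  exact (div_le_iff₀ (hy i)).1 (Finset.le_sup' (fun i => x i / y i) (Finset.mem_univ i))

lemma mratio_lt {k : ℕ} [Nonempty (Fin k)] (x y : Fin k → ℝ)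
    (hx : ∀ i, 0 < x i) (hy : ∀ i, 0 < y i) (c : ℝ) (h : ∀ i, x i < c * y i) :
    Mratio x y < c := by
  rw [mratio_eq_sup x y hx hy]
  exact (Finset.sup'_lt_iff _).2 (fun i _ => (div_lt_iff₀ (hy i)).2 (h i))

/-- Fact 4: a standard interference mapping restricted to the interior
of the cone is a para-contraction w.r.t. Thompson's metric. -/
theorem stmt11 {k : ℕ} (f : (Fin k → ℝ) → (Fin k → ℝ))
    (hpos : ∀ x ∈ nonnegOrth k, f x ∈ posOrth k)
    (hmono : ∀ x ∈ nonnegOrth k, ∀ y ∈ nonnegOrth k, x ≤ y → f x ≤ f y)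
    (hscal : ∀ x ∈ nonnegOrth k, ∀ l : ℝ, 1 < l → ∀ i, f (l • x) i < l * f x i) :
    ∀ x ∈ posOrth k, ∀ y ∈ posOrth k, x ≠ y → dT (f x) (f y) < dT x y := by
  intro x hx y hy hxy
  rcases Nat.eq_zero_or_pos k with hk | hk
  · subst hk
    exact absurd (funext fun i => i.elim0) hxy
  haveI : Nonempty (Fin k) := ⟨⟨0, hk⟩⟩
  have hxnn : x ∈ nonnegOrth k := fun i => (hx i).le
  have hynn : y ∈ nonnegOrth k := fun i => (hy i).le
  set lam := max (Mratio x y) (Mratio y x) with hlam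
  have hxle : ∀ i, x i ≤ lam * y i := fun i =>
    (le_mratio_mul x y hx hy i).trans
      (mul_le_mul_of_nonneg_right (le_max_left _ _) (hy i).le)
  have hyle : ∀ i, y i ≤ lam * x i := fun i =>
    (le_mratio_mul y x hy hx i).trans
      (mul_le_mul_of_nonneg_right (le_max_right _ _) (hx i).le)
  have hlam1 : 1 < lam := by
    by_contra h
    push_neg at h
    apply hxy
    funext i
    have h1 : x i ≤ y i := (hxle i).trans (by nlinarith [hy i])
    have h2 : y i ≤ x i := (hyle i).trans (by nlinarith [hx i])
    linarith
  -- nonneg membership of lam • y and lam • x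
  have hly : (lam • y) ∈ nonnegOrth k := fun i => by
    have := hy i; simp only [Pi.smul_apply, smul_eq_mul]; nlinarith
  have hlx : (lam • x) ∈ nonnegOrth k := fun i => by
    have := hx i; simp only [Pi.smul_apply, smul_eq_mul]; nlinarith
  have hfx := hpos x hxnn
  have hfy := hpos y hynn
  have key1 : ∀ i, f x i < lam * f y i := fun i => by
    have h1 : f x ≤ f (lam • y) := hmono x hxnn _ hly (fun i => by
      simpa using hxle i)
    exact lt_of_le_of_lt (h1 i) (hscal y hynn lam hlam1 i)
  have key2 : ∀ i, f y i < lam * f x i := fun i => by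
    have h1 : f y ≤ f (lam • x) := hmono y hynn _ hlx (fun i => by
      simpa using hyle i)
    exact lt_of_le_of_lt (h1 i) (hscal x hxnn lam hlam1 i)
  have hM1 : Mratio (f x) (f y) < lam := mratio_lt _ _ hfx hfy lam key1
  have hM2 : Mratio (f y) (f x) < lam := mratio_lt _ _ hfy hfx lam key2
  have hmaxpos : 0 < max (Mratio (f x) (f y)) (Mratio (f y) (f x)) :=
    lt_max_of_lt_left (mratio_pos _ _ hfx hfy)
  exact Real.log_lt_log hmaxpos (max_lt hM1 hM2)
end

section
/- Let f : ℝ_+ → ℝ_+ be defined by f(x) = 4/(1 + e^{2−x}). Then f is a standard interference mapping with unique fixed point x* = 2, and for any starting point x₁ > 2 the fixed point iteration x_{n+1} = f(x_n) converges to 2 but not geometrically: for every c ∈ [0,1) and γ > 0 there exists n with |x_{n+1} − 2| > γ c^n. -/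
open Filter Topology Set

noncomputable def fmap (x : ℝ) : ℝ := 4 / (1 + Real.exp (2 - x))

/-!
Everything about `f` comes from two facts. First, `x / f x = x (1 + e^{2-x}) / 4` is strictly
increasing, since its derivative `(1 - (x - 1) e^{2-x}) / 4` vanishes only at `x = 2`; this gives
scalability, uniqueness of the fixed point and `2 < f x < x` for `x > 2`, so the iteration
decreases to `2`. Second, `f' 2 = 1`: the ratios `|x (n+1) - 2| / |x n - 2|` tend to `1`, so
eventually they exceed any `r ∈ (c, 1)`, and the errors then decay no faster than `r ^ n`.
-/

lemma strictMono_of_hasDerivAt_pos_of_ne {f f' : ℝ → ℝ} {a : ℝ}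
    (hf : ∀ x, HasDerivAt f (f' x) x) (hpos : ∀ x, x ≠ a → 0 < f' x) : StrictMono f := by
  have hcont : Continuous f := continuous_iff_continuousAt.2 fun x => (hf x).continuousAt
  refine StrictMonoOn.Iic_union_Ici (a := a) ?_ ?_
  · refine strictMonoOn_of_deriv_pos (convex_Iic a) hcont.continuousOn fun x hx => ?_
    rw [interior_Iic] at hx
    exact (hf x).deriv ▸ hpos x hx.ne
  · refine strictMonoOn_of_deriv_pos (convex_Ici a) hcont.continuousOn fun x hx => ?_
    rw [interior_Ici] at hx
    exact (hf x).deriv ▸ hpos x hx.ne'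

lemma lt_mul_of_strictMonoOn_div {f : ℝ → ℝ} (hpos : ∀ x, 0 ≤ x → 0 < f x)
    (hmono : StrictMonoOn (fun x => x / f x) (Ioi 0)) {x : ℝ} (hx : 0 ≤ x) {l : ℝ} (hl : 1 < l) :
    f (l * x) < l * f x := by
  rcases hx.eq_or_lt with rfl | hx
  · simpa using lt_mul_of_one_lt_left (hpos 0 le_rfl) hl
  have hlx : x < l * x := lt_mul_of_one_lt_left hx hl
  have h : x / f x < l * x / f (l * x) := hmono hx (hx.trans hlx) hlx
  rw [div_lt_div_iff₀ (hpos x hx.le) (hpos _ (hx.trans hlx).le)] at h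
  exact lt_of_mul_lt_mul_left (by linarith : x * f (l * x) < x * (l * f x)) hx.le

lemma tendsto_of_iterate_of_lt_self {f : ℝ → ℝ} {a : ℝ} (hf : Continuous f)
    (hlt : ∀ y, a < y → f y < y) {x : ℕ → ℝ} (hx : ∀ n, x (n + 1) = f (x n))
    (hxa : ∀ n, a < x n) : Tendsto x atTop (𝓝 a) := by
  have hanti : Antitone x := antitone_nat_of_succ_le fun n => hx n ▸ (hlt _ (hxa n)).le
  have hlim := tendsto_atTop_ciInf hanti ⟨a, by rintro _ ⟨n, rfl⟩; exact (hxa n).le⟩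
  set L := ⨅ n, x n
  have hfix : f L = L :=
    tendsto_nhds_unique ((hf.tendsto L).comp hlim)
      (by simpa only [Function.comp_def, hx] using hlim.comp (tendsto_add_atTop_nat 1))
  have haL : a ≤ L := le_ciInf fun n => (hxa n).le
  rcases haL.eq_or_lt with h | h
  · rwa [h]
  · exact absurd hfix (hlt L h).ne

lemma exists_mul_pow_lt_of_eventually_le_mul {e : ℕ → ℝ} (he : ∀ n, 0 < e n)
    (hratio : ∀ r < 1, ∀ᶠ n in atTop, r * e n ≤ e (n + 1)) {c : ℝ} (hc0 : 0 ≤ c) (hc1 : c < 1)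
    (γ : ℝ) : ∃ n, γ * c ^ n < e (n + 1) := by
  obtain ⟨r, hcr, hr1⟩ := exists_between hc1
  have hr : 0 < r := hc0.trans_lt hcr
  obtain ⟨N, hN⟩ := eventually_atTop.1 (hratio r hr1)
  have hgrowth : ∀ n, r ^ n * e N ≤ e (N + n) := by
    intro n
    induction n with
    | zero => simp
    | succ n ih =>
      calc r ^ (n + 1) * e N = r * (r ^ n * e N) := by ring
        _ ≤ r * e (N + n) := by gcongr
        _ ≤ e (N + (n + 1)) := hN (N + n) (Nat.le_add_right N n)
  have hsmall : Tendsto (fun n => γ * c ^ N * (c / r) ^ n) atTop (𝓝 0) := by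
    simpa using (tendsto_pow_atTop_nhds_zero_of_lt_one (div_nonneg hc0 hr.le)
      ((div_lt_one hr).2 hcr)).const_mul (γ * c ^ N)
  obtain ⟨n, hn⟩ := (hsmall.eventually (gt_mem_nhds (mul_pos hr (he N)))).exists
  refine ⟨N + n, ?_⟩
  calc γ * c ^ (N + n) = γ * c ^ N * (c / r) ^ n * r ^ n := by
        rw [div_pow, pow_add]; field_simp
    _ < r * e N * r ^ n := by gcongr
    _ = r ^ (n + 1) * e N := by ring
    _ ≤ e (N + n + 1) := hgrowth (n + 1)

lemma exists_mul_pow_lt_abs_sub_of_hasDerivAt {f : ℝ → ℝ} {a f' : ℝ} (hf : HasDerivAt f f' a)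
    (hf' : 1 ≤ |f'|) (hfa : f a = a) {x : ℕ → ℝ} (hx : ∀ n, x (n + 1) = f (x n))
    (hlim : Tendsto x atTop (𝓝 a)) (hne : ∀ n, x n ≠ a) {c : ℝ} (hc0 : 0 ≤ c) (hc1 : c < 1)
    (γ : ℝ) : ∃ n, γ * c ^ n < |x (n + 1) - a| := by
  have he : ∀ n, 0 < |x n - a| := fun n => abs_pos.2 (sub_ne_zero.2 (hne n))
  have hslope : Tendsto (fun n => |x (n + 1) - a| / |x n - a|) atTop (𝓝 |f'|) := by
    have h := (hf.tendsto_slope.comp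
      (tendsto_nhdsWithin_iff.2 ⟨hlim, Eventually.of_forall hne⟩)).abs
    simpa only [Function.comp_def, slope_def_field, hfa, ← hx, abs_div] using h
  refine exists_mul_pow_lt_of_eventually_le_mul he (fun r hr => ?_) hc0 hc1 γ
  filter_upwards [hslope.eventually_const_lt (hr.trans_le hf')] with n hn
  exact ((lt_div_iff₀ (he n)).1 hn).le

lemma fmap_pos (x : ℝ) : 0 < fmap x := by
  unfold fmap; positivity

lemma fmap_strictMono : StrictMono fmap := fun a b hab => by
  unfold fmap
  gcongr

lemma fmap_two : fmap 2 = 2 := by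
  norm_num [fmap]

lemma two_lt_fmap {x : ℝ} (hx : 2 < x) : 2 < fmap x :=
  fmap_two ▸ fmap_strictMono hx

lemma one_sub_mul_exp_pos {t : ℝ} (ht : t ≠ 2) : 0 < 1 - (t - 1) * Real.exp (2 - t) := by
  have hexp : t - 1 < Real.exp (t - 2) := by
    linarith [Real.add_one_lt_exp (sub_ne_zero.2 ht)]
  have : (t - 1) * Real.exp (2 - t) < 1 := by
    calc (t - 1) * Real.exp (2 - t) < Real.exp (t - 2) * Real.exp (2 - t) := by gcongr
      _ = 1 := by rw [← Real.exp_add]; simp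
  linarith

lemma strictMono_div_fmap : StrictMono fun x => x / fmap x := by
  have hdiv : (fun x => x / fmap x) = fun x => x * (1 + Real.exp (2 - x)) / 4 := by
    ext x; rw [fmap, div_div_eq_mul_div]
  rw [hdiv]
  refine StrictMono.div_const (strictMono_of_hasDerivAt_pos_of_ne (a := 2) (fun t => ?_)
    fun t ht => one_sub_mul_exp_pos ht) four_pos
  exact ((hasDerivAt_id' t).fun_mul (((hasDerivAt_id' t).const_sub 2).exp.const_add 1)).congr_deriv
    (by ring)

lemma fmap_eq_self_iff {x : ℝ} : fmap x = x ↔ x = 2 := by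
  refine ⟨fun h => strictMono_div_fmap.injective ?_, fun h => h ▸ fmap_two⟩
  have hx : x ≠ 0 := h ▸ (fmap_pos x).ne'
  rw [h, fmap_two, div_self hx, div_self two_ne_zero]

lemma fmap_lt_self {x : ℝ} (hx : 2 < x) : fmap x < x := by
  have h : 2 / fmap 2 < x / fmap x := strictMono_div_fmap hx
  rw [fmap_two, div_self two_ne_zero] at h
  exact (one_lt_div (fmap_pos x)).1 h

lemma hasDerivAt_fmap_two : HasDerivAt fmap 1 2 := by
  have h := (hasDerivAt_const (2 : ℝ) (4 : ℝ)).fun_div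
    (((hasDerivAt_id' (2 : ℝ)).const_sub 2).exp.const_add 1) (by positivity)
  exact h.congr_deriv (by norm_num)

lemma continuous_fmap : Continuous fmap :=
  continuous_const.div (by fun_prop) fun x => by positivity

/-- Example 2 of Feyzmahdavian et al.: fmap is a standard interference
mapping with unique fixed point 2, and the fixed point iteration started above 2
converges to 2 but not geometrically. -/
theorem stmt13 :
    (∀ x y : ℝ, 0 ≤ x → x ≤ y → fmap x ≤ fmap y) ∧
    (∀ x : ℝ, 0 ≤ x → ∀ l : ℝ, 1 < l → fmap (l * x) < l * fmap x) ∧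
    fmap 2 = 2 ∧
    (∀ x : ℝ, 0 ≤ x → fmap x = x → x = 2) ∧
    (∀ x : ℕ → ℝ, 2 < x 0 → (∀ n, x (n + 1) = fmap (x n)) →
      Tendsto x atTop (nhds 2) ∧
      (∀ c : ℝ, 0 ≤ c → c < 1 → ∀ γ : ℝ, 0 < γ →
        ∃ n : ℕ, γ * c ^ n < |x (n + 1) - 2|)) := by
  refine ⟨fun x y _ hxy => fmap_strictMono.monotone hxy,
    fun x hx l hl => lt_mul_of_strictMonoOn_div (fun x _ => fmap_pos x)
      (strictMono_div_fmap.strictMonoOn _) hx hl,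
    fmap_two, fun x _ => fmap_eq_self_iff.1, fun x hx0 hx => ?_⟩
  have hgt : ∀ n, 2 < x n := fun n => by
    induction n with
    | zero => exact hx0
    | succ n ih => exact hx n ▸ two_lt_fmap ih
  have hlim : Tendsto x atTop (𝓝 2) :=
    tendsto_of_iterate_of_lt_self continuous_fmap (fun _ => fmap_lt_self) hx hgt
  exact ⟨hlim, fun c hc0 hc1 γ _ => exists_mul_pow_lt_abs_sub_of_hasDerivAt hasDerivAt_fmap_two
    (by norm_num) fmap_two hx hlim (fun n => (hgt n).ne') hc0 hc1 γ⟩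
end

section
/- Let f : ℝ_+^k → int(ℝ_+^k) be a continuous positive concave mapping with fixed point x* ∈ int(ℝ_+^k), and suppose the asymptotic mapping f_∞ has an eigenvector v ∈ ℝ_+^k \ {0} with eigenvalue ρ > 0, i.e., f_∞(v) = ρv. If the starting point satisfies x₁ ≤ x* − εv or x₁ ≥ x* + εv for some ε > 0, then the fixed point iteration x_{n+1} = f(x_n) satisfies ρ^n ε ‖v‖ ≤ ‖x_{n+1} − x*‖ for all n ∈ ℕ; consequently, the iteration cannot converge geometrically with any factor c < ρ. -/
open Filter Topology Set

/-- lower bound on the error of the fixed point iteration via a positive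
eigenvalue ρ of the asymptotic mapping; hence no geometric convergence with factor below ρ. -/
theorem stmt16 {k : ℕ} (f finf : (Fin k → ℝ) → (Fin k → ℝ))
    (hpos : ∀ x ∈ nonnegOrth k, f x ∈ posOrth k)
    (hcont : ContinuousOn f (nonnegOrth k))
    (hconc : ∀ x ∈ nonnegOrth k, ∀ y ∈ nonnegOrth k, ∀ t : ℝ, 0 < t → t < 1 →
      t • f x + (1 - t) • f y ≤ f (t • x + (1 - t) • y))
    (xstar : Fin k → ℝ) (hxstar : xstar ∈ posOrth k) (hfix : f xstar = xstar)
    (hlim : ∀ x ∈ nonnegOrth k,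
      Tendsto (fun p : ℝ => p⁻¹ • f (p • x)) atTop (nhds (finf x)))
    (v : Fin k → ℝ) (hv : v ∈ nonnegOrth k) (hv0 : v ≠ 0)
    (ρ : ℝ) (hρ : 0 < ρ) (heig : finf v = ρ • v)
    (ε : ℝ) (hε : 0 < ε)
    (x : ℕ → Fin k → ℝ) (hx0mem : x 0 ∈ nonnegOrth k)
    (hx0 : x 0 ≤ xstar - ε • v ∨ xstar + ε • v ≤ x 0)
    (hiter : ∀ n, x (n + 1) = f (x n)) :
    (∀ n : ℕ, ρ ^ (n + 1) * ε * ‖v‖ ≤ ‖x (n + 1) - xstar‖) ∧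
    (∀ c : ℝ, 0 ≤ c → c < ρ →
      ¬ ∃ γ : ℝ, 0 < γ ∧ ∀ n : ℕ, ‖x (n + 1) - xstar‖ ≤ γ * c ^ n) := by
  classical
  have hsmul_mem : ∀ (c : ℝ), 0 ≤ c → ∀ w ∈ nonnegOrth k, c • w ∈ nonnegOrth k := by
    intro c hc w hw i
    exact mul_nonneg hc (hw i)
  -- Key superadditivity-type inequality: f a + finf h ≤ f (a + h)
  have key : ∀ a ∈ nonnegOrth k, ∀ h ∈ nonnegOrth k, f a + finf h ≤ f (a + h) := by
    intro a ha h hh i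
    have hlim1 : Tendsto (fun p : ℝ => (p⁻¹ • f (p • h)) i) atTop (𝓝 (finf h i)) :=
      ((continuous_apply i).tendsto _).comp (hlim h hh)
    have h0 : Tendsto (fun p : ℝ => 1 - p⁻¹) atTop (𝓝 1) := by
      simpa using (tendsto_const_nhds : Tendsto (fun _ : ℝ => (1:ℝ)) atTop (𝓝 1)).sub tendsto_inv_atTop_zero
    have hc1 : Tendsto (fun p : ℝ => (1 - p⁻¹)⁻¹) atTop (𝓝 1) := by
      simpa using h0.inv₀ one_ne_zero
    have harg : Tendsto (fun p : ℝ => (1 - p⁻¹)⁻¹ • a) atTop (𝓝[nonnegOrth k] a) := by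
      rw [tendsto_nhdsWithin_iff]
      constructor
      · simpa using hc1.smul_const a
      · filter_upwards [eventually_ge_atTop (2:ℝ)] with p hp
        have hp1 : (1:ℝ) < p := by linarith
        have htlt : p⁻¹ < 1 := inv_lt_one_of_one_lt₀ hp1
        exact hsmul_mem _ (inv_nonneg.mpr (by linarith)) a ha
    have hfa : Tendsto (fun p : ℝ => f ((1 - p⁻¹)⁻¹ • a)) atTop (𝓝 (f a)) :=
      Filter.Tendsto.comp (hcont a ha) harg
    have h2 : Tendsto (fun p : ℝ => (1 - p⁻¹) * (f ((1 - p⁻¹)⁻¹ • a)) i) atTop (𝓝 (f a i)) := by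
      have := h0.mul (((continuous_apply i).tendsto _).comp hfa)
      simpa using this
    have hterm : Tendsto
        (fun p : ℝ => (p⁻¹ • f (p • h)) i + (1 - p⁻¹) * (f ((1 - p⁻¹)⁻¹ • a)) i)
        atTop (𝓝 (finf h i + f a i)) := hlim1.add h2
    have hle : finf h i + f a i ≤ f (a + h) i := by
      refine le_of_tendsto hterm ?_
      filter_upwards [eventually_ge_atTop (2:ℝ)] with p hp
      have hp1 : (1:ℝ) < p := by linarith
      have hp0 : (0:ℝ) < p := by linarith
      have htlt : p⁻¹ < 1 := inv_lt_one_of_one_lt₀ hp1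
      have ht0 : 0 < p⁻¹ := inv_pos.mpr hp0
      have hxmem : p • h ∈ nonnegOrth k := hsmul_mem _ hp0.le h hh
      have hymem : (1 - p⁻¹)⁻¹ • a ∈ nonnegOrth k :=
        hsmul_mem _ (inv_nonneg.mpr (by linarith)) a ha
      have hcc := hconc _ hxmem _ hymem p⁻¹ ht0 htlt
      have heqarg : p⁻¹ • (p • h) + (1 - p⁻¹) • ((1 - p⁻¹)⁻¹ • a) = a + h := by
        rw [smul_smul, smul_smul, inv_mul_cancel₀ hp0.ne',
          mul_inv_cancel₀ (by linarith : (1:ℝ) - p⁻¹ ≠ 0), one_smul, one_smul, add_comm]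
      rw [heqarg] at hcc
      have hcci := hcc i
      simpa [Pi.add_apply, Pi.smul_apply, smul_eq_mul] using hcci
    have : (f a + finf h) i = finf h i + f a i := by simp [Pi.add_apply, add_comm]
    rw [this]
    exact hle
  -- finf is nonnegative on the nonnegative orthant
  have hfinf_nonneg : ∀ h ∈ nonnegOrth k, ∀ i, 0 ≤ finf h i := by
    intro h hh i
    have hlim1 : Tendsto (fun p : ℝ => (p⁻¹ • f (p • h)) i) atTop (𝓝 (finf h i)) :=
      ((continuous_apply i).tendsto _).comp (hlim h hh)
    refine ge_of_tendsto hlim1 ?_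
    filter_upwards [eventually_ge_atTop (1:ℝ)] with p hp
    have hp0 : (0:ℝ) < p := by linarith
    have hfp := (hpos _ (hsmul_mem _ hp0.le h hh)) i
    have : (0:ℝ) ≤ p⁻¹ * f (p • h) i := mul_nonneg (inv_nonneg.mpr hp0.le) hfp.le
    simpa [Pi.smul_apply, smul_eq_mul] using this
  -- monotonicity of f
  have hmono : ∀ a ∈ nonnegOrth k, ∀ b ∈ nonnegOrth k, a ≤ b → f a ≤ f b := by
    intro a ha b hb hab
    have hd : b - a ∈ nonnegOrth k := fun i => sub_nonneg.mpr (hab i)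
    have hk := key a ha (b - a) hd
    have heq : a + (b - a) = b := by abel
    rw [heq] at hk
    intro i
    have h1 : f a i + finf (b - a) i ≤ f b i := hk i
    linarith [hfinf_nonneg _ hd i]
  -- positive homogeneity of finf along v
  have hhom : ∀ c : ℝ, 0 < c → finf (c • v) = (c * ρ) • v := by
    intro c hc
    have h1 := hlim (c • v) (hsmul_mem c hc.le v hv)
    have hmap : Tendsto (fun p : ℝ => p * c) atTop atTop :=
      Tendsto.atTop_mul_const hc tendsto_id
    have h3 := ((hlim v hv).comp hmap).const_smul c
    have h2 : Tendsto (fun p : ℝ => p⁻¹ • f (p • (c • v))) atTop (𝓝 (c • finf v)) := by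
      refine h3.congr fun p => ?_
      show c • ((p * c)⁻¹ • f ((p * c) • v)) = p⁻¹ • f (p • (c • v))
      rw [smul_smul p c, smul_smul c, mul_inv, mul_comm p⁻¹ c⁻¹, ← mul_assoc,
        mul_inv_cancel₀ hc.ne', one_mul]
    have huniq := tendsto_nhds_unique h1 h2
    rw [huniq, heig, smul_smul]
  -- main induction
  have main : ∀ n : ℕ, x n ∈ nonnegOrth k ∧
      (x n ≤ xstar - (ρ ^ n * ε) • v ∨ xstar + (ρ ^ n * ε) • v ≤ x n) := by
    intro n
    induction n with
    | zero =>
      refine ⟨hx0mem, ?_⟩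
      simpa using hx0
    | succ n ih =>
      obtain ⟨hmem, hcase⟩ := ih
      have hcpos : 0 < ρ ^ n * ε := mul_pos (pow_pos hρ n) hε
      set c : ℝ := ρ ^ n * ε with hcdef
      have hsc : ρ ^ (n + 1) * ε = c * ρ := by rw [hcdef, pow_succ]; ring
      have hmemnew : x (n + 1) ∈ nonnegOrth k := by
        rw [hiter]
        exact fun i => (hpos _ hmem i).le
      refine ⟨hmemnew, ?_⟩
      rcases hcase with hle | hge
      · -- lower branch
        have hmem2 : xstar - c • v ∈ nonnegOrth k := fun i => le_trans (hmem i) (hle i)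
        have h1 : f (x n) ≤ f (xstar - c • v) := hmono _ hmem _ hmem2 hle
        have h2 := key (xstar - c • v) hmem2 (c • v) (hsmul_mem c hcpos.le v hv)
        have harg : (xstar - c • v) + c • v = xstar := by abel
        rw [harg, hfix, hhom c hcpos] at h2
        left
        intro i
        have h1i : f (x n) i ≤ f (xstar - c • v) i := h1 i
        have h2i : f (xstar - c • v) i + (c * ρ) * v i ≤ xstar i := h2 i
        have hxi : x (n + 1) i = f (x n) i := by rw [hiter]
        have hgoal : x (n + 1) i ≤ xstar i - (c * ρ) * v i := by rw [hxi]; linarith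
        show x (n + 1) i ≤ (xstar - (ρ ^ (n + 1) * ε) • v) i
        simp only [Pi.sub_apply, Pi.smul_apply, smul_eq_mul, hsc]
        exact hgoal
      · -- upper branch
        have hmem2 : xstar + c • v ∈ nonnegOrth k := by
          intro i
          have := hxstar i
          have := mul_nonneg hcpos.le (hv i)
          simp only [Pi.add_apply, Pi.smul_apply, smul_eq_mul]
          linarith
        have h1 : f (xstar + c • v) ≤ f (x n) := hmono _ hmem2 _ hmem hge
        have h2 := key xstar (fun i => (hxstar i).le) (c • v) (hsmul_mem c hcpos.le v hv)
        rw [hfix, hhom c hcpos] at h2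
        right
        intro i
        have h1i : f (xstar + c • v) i ≤ f (x n) i := h1 i
        have h2i : xstar i + (c * ρ) * v i ≤ f (xstar + c • v) i := h2 i
        have hxi : x (n + 1) i = f (x n) i := by rw [hiter]
        have hgoal : xstar i + (c * ρ) * v i ≤ x (n + 1) i := by rw [hxi]; linarith
        show (xstar + (ρ ^ (n + 1) * ε) • v) i ≤ x (n + 1) i
        simp only [Pi.add_apply, Pi.smul_apply, smul_eq_mul, hsc]
        exact hgoal
  -- Part 1 : norm lower bound
  have part1 : ∀ n : ℕ, ρ ^ (n + 1) * ε * ‖v‖ ≤ ‖x (n + 1) - xstar‖ := by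
    intro n
    have hcpos : 0 < ρ ^ (n + 1) * ε := mul_pos (pow_pos hρ _) hε
    set c : ℝ := ρ ^ (n + 1) * ε with hcdef
    have hbig : ∀ i, c * v i ≤ |x (n + 1) i - xstar i| := by
      intro i
      rcases (main (n + 1)).2 with hle | hge
      · have hlei : x (n + 1) i ≤ xstar i - c * v i := by
          have := hle i
          simpa [Pi.sub_apply, Pi.smul_apply, smul_eq_mul] using this
        have : c * v i ≤ -(x (n + 1) i - xstar i) := by linarith
        exact le_trans this (neg_le_abs _)
      · have hgei : xstar i + c * v i ≤ x (n + 1) i := by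
          have := hge i
          simpa [Pi.add_apply, Pi.smul_apply, smul_eq_mul] using this
        have : c * v i ≤ x (n + 1) i - xstar i := by linarith
        exact le_trans this (le_abs_self _)
    have hnv : ‖c • v‖ = c * ‖v‖ := by
      rw [norm_smul, Real.norm_eq_abs, abs_of_pos hcpos]
    have hle2 : ‖c • v‖ ≤ ‖x (n + 1) - xstar‖ := by
      refine (pi_norm_le_iff_of_nonneg (norm_nonneg _)).mpr ?_
      intro i
      have hvi : ‖(c • v) i‖ = c * v i := by
        simp only [Pi.smul_apply, smul_eq_mul, Real.norm_eq_abs]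
        exact abs_of_nonneg (mul_nonneg hcpos.le (hv i))
      rw [hvi]
      calc c * v i ≤ |x (n + 1) i - xstar i| := hbig i
        _ = ‖(x (n + 1) - xstar) i‖ := by simp [Real.norm_eq_abs]
        _ ≤ ‖x (n + 1) - xstar‖ := norm_le_pi_norm _ i
    calc ρ ^ (n + 1) * ε * ‖v‖ = ‖c • v‖ := hnv.symm
      _ ≤ ‖x (n + 1) - xstar‖ := hle2
  refine ⟨part1, ?_⟩
  -- Part 2 : no geometric convergence with factor below ρ
  intro c hc0 hcρ ⟨γ, hγ, hbound⟩
  have hvnorm : 0 < ‖v‖ := norm_pos_iff.mpr hv0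
  rcases eq_or_lt_of_le hc0 with hc0' | hcpos
  · -- c = 0
    have hb := hbound 1
    have hp := part1 1
    rw [← hc0'] at hb
    simp only [pow_one, mul_zero] at hb
    have : 0 < ρ ^ (1 + 1) * ε * ‖v‖ := by positivity
    linarith
  · -- 0 < c
    have h1lt : 1 < ρ / c := (one_lt_div hcpos).mpr hcρ
    set K : ℝ := γ / (ρ * ε * ‖v‖) with hKdef
    obtain ⟨n, hn⟩ := ((tendsto_pow_atTop_atTop_of_one_lt h1lt).eventually_gt_atTop K).exists
    have hcn : (0:ℝ) < c ^ n := pow_pos hcpos n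
    have hden : (0:ℝ) < ρ * ε * ‖v‖ := by positivity
    rw [div_pow] at hn
    rw [hKdef, div_lt_div_iff₀ hden hcn] at hn
    -- hn : γ * c ^ n < ρ ^ n * (ρ * ε * ‖v‖)
    have heq : ρ ^ (n + 1) * ε * ‖v‖ = ρ ^ n * (ρ * ε * ‖v‖) := by rw [pow_succ]; ring
    have hp := part1 n
    have hb := hbound n
    rw [heq] at hp
    linarith
end
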